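/- arXiv:0905.4482 — 2 statements merged into one kernel-verified Lean document; each statement's English description precedes it below -/
import Mathlib

section
/- (Single reweighted ℓ1-minimization.) Let Φ be an m×d real matrix with restricted isometry constant δ_{2s} = δ < √2 − 1, and set ρ = √2 δ/(1−δ) and α = 2√(1+δ)/(1−δ). Let x ∈ ℝ^d be an arbitrary vector with noisy measurements u = Φx + e where ‖e‖₂ ≤ ε. Let w ∈ ℝ^d satisfy ‖w − x‖_∞ ≤ A for some constant A. Let x_s denote a best s-sparse approximation of x, where s ≤ |supp(x)|; let μ be the smallest nonzero coordinate of x_s in absolute value, and set b = ‖x − x_s‖_∞. Let a > 0 and let x̂ be a minimizer of the weighted ℓ1 norm Σᵢ |zᵢ|/(|wᵢ| + a) over all z ∈ ℝ^d with ‖Φz − u‖₂ ≤ ε. Set C₁ = (A + a + b)/(μ − A + a) and C₂ = 2(A + a + b)/√s. Then if μ ≥ A and ρC₁ < 1, ‖x − x̂‖₂ ≤ D₁ ε + D₂ ‖x − x_s‖₁ / a, where D₁ = (1 + C₁)α/(1 − ρC₁) and D₂ = C₂ + (1 + C₁)ρC₂/(1 − ρC₁). -/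
/-- The Euclidean (ℓ2) norm of a finitely-indexed real vector. -/
noncomputable def l2 {ι : Type*} [Fintype ι] (v : ι → ℝ) : ℝ :=
  Real.sqrt (∑ i, (v i) ^ 2)

/-- The ℓ1 norm of a finitely-indexed real vector. -/
noncomputable def l1 {ι : Type*} [Fintype ι] (v : ι → ℝ) : ℝ :=
  ∑ i, |v i|

/-- The supremum (ℓ∞) norm of a finitely-indexed real vector. -/
noncomputable def linf {ι : Type*} [Fintype ι] (v : ι → ℝ) : ℝ :=
  ⨆ i, |v i|

/-- A vector is `s`-sparse if it has at most `s` nonzero coordinates. -/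
def Sparse {d : ℕ} (s : ℕ) (v : Fin d → ℝ) : Prop :=
  {i | v i ≠ 0}.ncard ≤ s

/-- The restriction of a vector to a set of coordinates (zero elsewhere). -/
def restr {d : ℕ} (S : Finset (Fin d)) (v : Fin d → ℝ) : Fin d → ℝ :=
  fun i => if i ∈ S then v i else 0

/-- `δ` satisfies the restricted isometry inequalities of `Φ` at sparsity level `r`
(quadratic form). -/
def RICq {m d : ℕ} (Φ : Matrix (Fin m) (Fin d) ℝ) (r : ℕ) (δ : ℝ) : Prop :=
  ∀ v : Fin d → ℝ, Sparse r v →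
    (1 - δ) * (l2 v) ^ 2 ≤ (l2 (Φ.mulVec v)) ^ 2 ∧
      (l2 (Φ.mulVec v)) ^ 2 ≤ (1 + δ) * (l2 v) ^ 2

/-!
Write `h = x - x̂`. Since `x` and `x̂` are both feasible, `‖Φh‖₂ ≤ 2ε` (tube constraint).
The weights `|wᵢ| + a` are at least `μ - A + a` on `S` and at most `A + a + b` off `S`, so the
weighted minimality of `x̂` gives the cone constraint
`‖h_{Sᶜ}‖₁ ≤ C₁ ‖h_S‖₁ + 2 (A + a + b) ‖x - x_s‖₁ / a`.
From there the argument is Candès' RIP argument for ℓ1 minimization: split `Sᶜ` into blocks of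
`s` coordinates of decreasing magnitude `T₀, T₁, …`; restricted orthogonality gives
`‖h_{S ∪ T₀}‖₂ ≤ α ε + ρ Σⱼ ‖h_{Tⱼ}‖₂`, the tail satisfies `Σⱼ ‖h_{Tⱼ}‖₂ ≤ ‖h_{Sᶜ}‖₁ / √s`, and
the cone constraint closes the resulting linear inequality in `‖h_{S ∪ T₀}‖₂` since `ρ C₁ < 1`.
-/

open Matrix Finset

section L2

variable {ι : Type*} [Fintype ι]

lemma l2_eq_norm (v : ι → ℝ) : l2 v = ‖WithLp.toLp 2 v‖ := by
  simp [l2, EuclideanSpace.norm_eq]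

lemma l2_nonneg (v : ι → ℝ) : 0 ≤ l2 v := Real.sqrt_nonneg _

lemma l2_sq (v : ι → ℝ) : l2 v ^ 2 = v ⬝ᵥ v := by
  rw [l2, Real.sq_sqrt (by positivity)]
  simp [dotProduct, sq]

lemma l2_eq_zero_iff {v : ι → ℝ} : l2 v = 0 ↔ v = 0 := by
  simp [l2_eq_norm]

@[simp]
lemma l2_zero : l2 (0 : ι → ℝ) = 0 := by simp [l2]

lemma l2_neg (v : ι → ℝ) : l2 (-v) = l2 v := by
  simp [l2]

lemma l2_add_le (u v : ι → ℝ) : l2 (u + v) ≤ l2 u + l2 v := by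
  simpa [l2_eq_norm] using norm_add_le (WithLp.toLp 2 u) (WithLp.toLp 2 v)

lemma l2_sub_le (u v : ι → ℝ) : l2 (u - v) ≤ l2 u + l2 v := by
  simpa [l2_eq_norm] using norm_sub_le (WithLp.toLp 2 u) (WithLp.toLp 2 v)

lemma l2_sum_le {κ : Type*} (F : Finset κ) (f : κ → ι → ℝ) :
    l2 (∑ j ∈ F, f j) ≤ ∑ j ∈ F, l2 (f j) := by
  simpa [l2_eq_norm, WithLp.toLp_sum] using norm_sum_le F (fun j => WithLp.toLp 2 (f j))

lemma abs_dotProduct_le (u v : ι → ℝ) : |u ⬝ᵥ v| ≤ l2 u * l2 v := by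
  simpa [l2_eq_norm, EuclideanSpace.inner_toLp_toLp, dotProduct_comm] using
    abs_real_inner_le_norm (WithLp.toLp 2 u) (WithLp.toLp 2 v)

lemma abs_le_linf (v : ι → ℝ) (i : ι) : |v i| ≤ linf v :=
  le_ciSup (f := fun j => |v j|) (Set.finite_range _).bddAbove i

end L2

section Restr

variable {d : ℕ}

lemma restr_add_restr_compl (T : Finset (Fin d)) (v : Fin d → ℝ) :
    restr T v + restr Tᶜ v = v := by
  ext i; by_cases hi : i ∈ T <;> simp [restr, hi]

lemma sub_restr (T : Finset (Fin d)) (v : Fin d → ℝ) : v - restr T v = restr Tᶜ v := by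
  rw [sub_eq_iff_eq_add', restr_add_restr_compl]

lemma restr_union {S T : Finset (Fin d)} (hST : Disjoint S T) (v : Fin d → ℝ) :
    restr (S ∪ T) v = restr S v + restr T v := by
  ext i
  by_cases hS : i ∈ S
  · simp [restr, hS, Finset.disjoint_left.1 hST hS]
  · by_cases hT : i ∈ T <;> simp [restr, hS, hT]

lemma l2_restr_sq (T : Finset (Fin d)) (v : Fin d → ℝ) :
    l2 (restr T v) ^ 2 = ∑ i ∈ T, v i ^ 2 := by
  rw [l2_sq]
  simp [dotProduct, restr, apply_ite, sq]

lemma l1_restr (T : Finset (Fin d)) (v : Fin d → ℝ) : l1 (restr T v) = ∑ i ∈ T, |v i| := by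
  simp [l1, restr, apply_ite]

lemma restr_dotProduct_restr {T T' : Finset (Fin d)} (h : Disjoint T T') (u v : Fin d → ℝ) :
    restr T u ⬝ᵥ restr T' v = 0 := by
  refine Finset.sum_eq_zero fun i _ => ?_
  by_cases hi : i ∈ T <;> simp [restr, hi, Finset.disjoint_left.1 h]

lemma abs_le_linf_sub_restr {T : Finset (Fin d)} {i : Fin d} (hi : i ∉ T) (v : Fin d → ℝ) :
    |v i| ≤ linf (v - restr T v) := by
  simpa [sub_restr, restr, hi] using abs_le_linf (v - restr T v) i

lemma l2_restr_mono {S T : Finset (Fin d)} (hST : S ⊆ T) (v : Fin d → ℝ) :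
    l2 (restr S v) ≤ l2 (restr T v) := by
  rw [← pow_le_pow_iff_left₀ (l2_nonneg _) (l2_nonneg _) two_ne_zero, l2_restr_sq, l2_restr_sq]
  exact sum_le_sum_of_subset_of_nonneg hST fun i _ _ => sq_nonneg (v i)

lemma sum_abs_le_sqrt_card_mul_l2_restr (T : Finset (Fin d)) (v : Fin d → ℝ) :
    ∑ i ∈ T, |v i| ≤ √T.card * l2 (restr T v) := by
  rw [← pow_le_pow_iff_left₀ (sum_nonneg fun i _ => abs_nonneg (v i))
    (mul_nonneg (Real.sqrt_nonneg _) (l2_nonneg _)) two_ne_zero, mul_pow,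
    Real.sq_sqrt T.card.cast_nonneg, l2_restr_sq]
  simpa using sq_sum_le_card_mul_sum_sq (s := T) (f := fun i => |v i|)

end Restr

section Sparse

variable {d : ℕ}

lemma sparse_restr {r : ℕ} {T : Finset (Fin d)} (hT : T.card ≤ r) (v : Fin d → ℝ) :
    Sparse r (restr T v) := by
  refine le_trans ?_ ((Set.ncard_coe_finset T).trans_le hT)
  refine Set.ncard_le_ncard (fun i hi => ?_) (Set.toFinite _)
  by_contra hiT
  exact hi (by simp [restr, Finset.mem_coe.not.1 hiT])

lemma Sparse.of_support_subset {r r' : ℕ} {u v w : Fin d → ℝ} (hu : Sparse r u)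
    (hv : Sparse r' v) (hw : ∀ i, w i ≠ 0 → u i ≠ 0 ∨ v i ≠ 0) : Sparse (r + r') w :=
  calc {i | w i ≠ 0}.ncard ≤ ({i | u i ≠ 0} ∪ {i | v i ≠ 0}).ncard :=
        Set.ncard_le_ncard (fun i hi => hw i hi) (Set.toFinite _)
    _ ≤ r + r' := (Set.ncard_union_le _ _).trans (add_le_add hu hv)

lemma Sparse.smul {r : ℕ} {v : Fin d → ℝ} (hv : Sparse r v) (c : ℝ) : Sparse r (c • v) :=
  le_trans (Set.ncard_le_ncard (fun _ hi => right_ne_zero_of_mul hi) (Set.toFinite _)) hv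

lemma Sparse.add {r r' : ℕ} {u v : Fin d → ℝ} (hu : Sparse r u) (hv : Sparse r' v) :
    Sparse (r + r') (u + v) :=
  hu.of_support_subset hv fun i hi => by by_contra! h; simp [h.1, h.2] at hi

lemma Sparse.sub {r r' : ℕ} {u v : Fin d → ℝ} (hu : Sparse r u) (hv : Sparse r' v) :
    Sparse (r + r') (u - v) :=
  hu.of_support_subset hv fun i hi => by by_contra! h; simp [h.1, h.2] at hi

end Sparse

section Blocks

variable {d : ℕ}

lemma exists_subset_card_eq_forall_abs_le (v : Fin d → ℝ) {k : ℕ} {T : Finset (Fin d)}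
    (hk : k ≤ T.card) : ∃ F ⊆ T, F.card = k ∧ ∀ i ∈ F, ∀ j ∈ T \ F, |v j| ≤ |v i| := by
  induction k generalizing T with
  | zero => exact ⟨∅, empty_subset _, rfl, by simp⟩
  | succ k ih =>
    obtain ⟨i₀, hi₀, hmax⟩ := T.exists_max_image (|v ·|) (card_pos.1 (by omega))
    obtain ⟨F, hF, hcard, hdom⟩ := ih (T := T.erase i₀) (by rw [card_erase_of_mem hi₀]; omega)
    refine ⟨insert i₀ F, insert_subset hi₀ (hF.trans (erase_subset _ _)), ?_, ?_⟩
    · rw [card_insert_of_notMem fun h => by simpa using hF h, hcard]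
    · intro i hi j hj
      rw [mem_sdiff, mem_insert, not_or] at hj
      rcases mem_insert.1 hi with rfl | hi
      · exact hmax j hj.1
      · exact hdom i hi j (mem_sdiff.2 ⟨mem_erase.2 ⟨hj.2.1, hj.1⟩, hj.2.2⟩)

lemma sqrt_mul_l2_restr_le {s : ℕ} {T : Finset (Fin d)} (hT : T.card ≤ s) {v : Fin d → ℝ}
    {M : ℝ} (hM0 : 0 ≤ M) (hM : ∀ i ∈ T, |v i| ≤ M) : √s * l2 (restr T v) ≤ s * M := by
  have hs : (0 : ℝ) ≤ s := s.cast_nonneg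
  rw [← pow_le_pow_iff_left₀ (by positivity [l2_nonneg (restr T v)]) (by positivity) two_ne_zero,
    mul_pow, mul_pow, Real.sq_sqrt hs, l2_restr_sq, sq (s : ℝ), mul_assoc]
  gcongr
  calc ∑ i ∈ T, v i ^ 2 ≤ ∑ _i ∈ T, M ^ 2 :=
        sum_le_sum fun i hi => sq_abs (v i) ▸ pow_le_pow_left₀ (abs_nonneg _) (hM i hi) 2
    _ = T.card * M ^ 2 := by rw [sum_const, nsmul_eq_mul]
    _ ≤ s * M ^ 2 := by gcongr

/-- `T₀` holds `s` largest entries of `v` on `T`, and the blocks hold the next `s`, the `s` after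
those, and so on. Every entry of a block is at most the average magnitude over the previous
block, so `√s` times the `ℓ2` norm of a block is at most the `ℓ1` norm of the previous one. -/
lemma exists_head_and_blocks (v : Fin d → ℝ) {s : ℕ} (hs : 0 < s) (T : Finset (Fin d)) :
    ∃ T₀ ⊆ T, T₀.card ≤ s ∧ ∃ (n : ℕ) (B : Fin n → Finset (Fin d)),
      (∀ j, B j ⊆ T \ T₀ ∧ (B j).card ≤ s) ∧ restr (T \ T₀) v = ∑ j, restr (B j) v ∧
      √s * ∑ j, l2 (restr (B j) v) ≤ ∑ i ∈ T, |v i| := by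
  induction T using Finset.strongInduction with
  | H T ih =>
  by_cases hT : T.card ≤ s
  · refine ⟨T, subset_rfl, hT, 0, Fin.elim0, Fin.rec0, ?_, ?_⟩
    · ext i; simp [restr]
    · simpa using sum_nonneg fun i _ => abs_nonneg (v i)
  obtain ⟨F, hFT, hFcard, hdom⟩ := exists_subset_card_eq_forall_abs_le v (not_le.1 hT).le
  obtain ⟨T₁, hT₁, hT₁card, n, B, hB, hsum, hbound⟩ :=
    ih (T \ F) (sdiff_ssubset hFT (card_pos.1 (hFcard ▸ hs)))
  refine ⟨F, hFT, hFcard.le, n + 1, Fin.cons T₁ B, ?_, ?_, ?_⟩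
  · exact Fin.forall_fin_succ.2 ⟨⟨hT₁, hT₁card⟩, fun j => ⟨(hB j).1.trans sdiff_subset, (hB j).2⟩⟩
  · rw [Fin.sum_univ_succ, Fin.cons_zero]
    simp only [Fin.cons_succ]
    rw [← hsum, ← restr_union disjoint_sdiff, union_sdiff_of_subset hT₁]
  · have hs' : (0 : ℝ) < s := by exact_mod_cast hs
    have hhead : √s * l2 (restr T₁ v) ≤ ∑ i ∈ F, |v i| := by
      have hM : ∀ i ∈ T₁, |v i| ≤ (∑ i ∈ F, |v i|) / s := fun i hi => by
        rw [le_div_iff₀ hs', mul_comm, ← nsmul_eq_mul, ← hFcard]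
        exact card_nsmul_le_sum F _ _ fun j hj => hdom j hj i (hT₁ hi)
      refine (sqrt_mul_l2_restr_le hT₁card (by positivity) hM).trans_eq ?_
      field_simp
    rw [Fin.sum_univ_succ, Fin.cons_zero, mul_add, ← sum_sdiff hFT]
    simp only [Fin.cons_succ]
    linarith

end Blocks

section RIP

variable {m d s : ℕ} {Φ : Matrix (Fin m) (Fin d) ℝ} {δ : ℝ}

lemma l2_mulVec_sub_le_of_feasible {u : Fin m → ℝ} {z z' : Fin d → ℝ} {ε : ℝ}
    (hz : l2 (Φ *ᵥ z - u) ≤ ε) (hz' : l2 (Φ *ᵥ z' - u) ≤ ε) : l2 (Φ *ᵥ (z - z')) ≤ 2 * ε := by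
  have := l2_sub_le (Φ *ᵥ z - u) (Φ *ᵥ z' - u)
  rw [sub_sub_sub_cancel_right, ← mulVec_sub] at this
  linarith

lemma l2_mulVec_le_of_rip {r : ℕ} (hΦ : RICq Φ r δ) {v : Fin d → ℝ} (hv : Sparse r v) :
    l2 (Φ *ᵥ v) ≤ √(1 + δ) * l2 v := by
  rw [← Real.sqrt_sq (l2_nonneg v), ← Real.sqrt_mul' _ (sq_nonneg _)]
  exact Real.le_sqrt_of_sq_le (hΦ v hv).2

/-- Restricted orthogonality: the polarization identity turns the RIP bounds on
`Φ(p ± q)` into a bound on `⟨Φp, Φq⟩`, after rescaling `u` and `v` to a common norm. -/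
lemma abs_dotProduct_mulVec_le_of_rip {r r' : ℕ} (hΦ : RICq Φ (r + r') δ) {u v : Fin d → ℝ}
    (hu : Sparse r u) (hv : Sparse r' v) (huv : u ⬝ᵥ v = 0) :
    |(Φ *ᵥ u) ⬝ᵥ (Φ *ᵥ v)| ≤ δ * l2 u * l2 v := by
  set N := l2 u * l2 v with hN
  set p := l2 v • u
  set q := l2 u • v
  have hp : p ⬝ᵥ p = N ^ 2 := by
    simp only [p, smul_dotProduct, dotProduct_smul, ← l2_sq, smul_eq_mul]; ring
  have hq : q ⬝ᵥ q = N ^ 2 := by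
    simp only [q, smul_dotProduct, dotProduct_smul, ← l2_sq, smul_eq_mul]; ring
  have hpq : p ⬝ᵥ q = 0 := by simp [p, q, huv]
  have hadd : l2 (p + q) ^ 2 = 2 * N ^ 2 := by
    rw [l2_sq, add_dotProduct, dotProduct_add, dotProduct_add, dotProduct_comm q p]
    linarith
  have hsub : l2 (p - q) ^ 2 = 2 * N ^ 2 := by
    rw [l2_sq, sub_dotProduct, dotProduct_sub, dotProduct_sub, dotProduct_comm q p]
    linarith
  have hplus := hΦ (p + q) ((hu.smul _).add (hv.smul _))
  have hminus := hΦ (p - q) ((hu.smul _).sub (hv.smul _))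
  have hpolar : 4 * ((Φ *ᵥ p) ⬝ᵥ (Φ *ᵥ q))
      = l2 (Φ *ᵥ (p + q)) ^ 2 - l2 (Φ *ᵥ (p - q)) ^ 2 := by
    simp only [l2_sq, mulVec_add, mulVec_sub, add_dotProduct, dotProduct_add, sub_dotProduct,
      dotProduct_sub, dotProduct_comm (Φ *ᵥ q)]
    ring
  have hscale : (Φ *ᵥ p) ⬝ᵥ (Φ *ᵥ q) = N * ((Φ *ᵥ u) ⬝ᵥ (Φ *ᵥ v)) := by
    simp only [p, q, mulVec_smul, smul_dotProduct, dotProduct_smul, smul_eq_mul]; ring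
  have hN0 : 0 ≤ N := mul_nonneg (l2_nonneg u) (l2_nonneg v)
  have key : N * |(Φ *ᵥ u) ⬝ᵥ (Φ *ᵥ v)| ≤ N * (δ * N) := by
    rw [← abs_of_nonneg hN0, ← abs_mul, ← hscale, abs_of_nonneg hN0, abs_le]
    rw [hadd] at hplus
    rw [hsub] at hminus
    constructor <;> nlinarith
  rcases hN0.eq_or_lt with hN0 | hN0
  · rcases mul_eq_zero.1 hN0.symm with h | h <;> simp [l2_eq_zero_iff.1 h]
  · calc _ ≤ δ * N := le_of_mul_le_mul_left key hN0
      _ = δ * l2 u * l2 v := by rw [hN, mul_assoc]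

lemma abs_dotProduct_mulVec_restr_union_le (hΦ : RICq Φ (2 * s) δ) (hδ : 0 ≤ δ)
    {S T B : Finset (Fin d)} (hS : S.card ≤ s) (hT : T.card ≤ s) (hB : B.card ≤ s)
    (hST : Disjoint S T) (hSTB : Disjoint (S ∪ T) B) (h : Fin d → ℝ) :
    |(Φ *ᵥ restr (S ∪ T) h) ⬝ᵥ (Φ *ᵥ restr B h)|
      ≤ √2 * δ * l2 (restr (S ∪ T) h) * l2 (restr B h) := by
  rw [two_mul] at hΦ
  obtain ⟨hSB, hTB⟩ := Finset.disjoint_union_left.1 hSTB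
  have hS' := abs_dotProduct_mulVec_le_of_rip hΦ (sparse_restr hS h) (sparse_restr hB h)
    (restr_dotProduct_restr hSB h h)
  have hT' := abs_dotProduct_mulVec_le_of_rip hΦ (sparse_restr hT h) (sparse_restr hB h)
    (restr_dotProduct_restr hTB h h)
  have hsum : l2 (restr S h) + l2 (restr T h) ≤ √2 * l2 (restr (S ∪ T) h) := by
    rw [← Real.sqrt_sq (l2_nonneg (restr (S ∪ T) h)), ← Real.sqrt_mul zero_le_two]
    apply Real.le_sqrt_of_sq_le
    rw [l2_restr_sq, sum_union hST, ← l2_restr_sq, ← l2_restr_sq]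
    nlinarith [sq_nonneg (l2 (restr S h) - l2 (restr T h))]
  calc _ = |(Φ *ᵥ restr S h) ⬝ᵥ (Φ *ᵥ restr B h) + (Φ *ᵥ restr T h) ⬝ᵥ (Φ *ᵥ restr B h)| := by
        rw [restr_union hST, mulVec_add, add_dotProduct]
    _ ≤ δ * (l2 (restr S h) + l2 (restr T h)) * l2 (restr B h) := by
        linarith [abs_add_le ((Φ *ᵥ restr S h) ⬝ᵥ (Φ *ᵥ restr B h))
          ((Φ *ᵥ restr T h) ⬝ᵥ (Φ *ᵥ restr B h))]
    _ ≤ δ * (√2 * l2 (restr (S ∪ T) h)) * l2 (restr B h) := by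
        gcongr
        exact l2_nonneg _
    _ = _ := by ring

lemma sub_mul_l2_restr_le_of_rip (hΦ : RICq Φ (2 * s) δ) (hδ : 0 ≤ δ)
    {S T : Finset (Fin d)} (hS : S.card ≤ s) (hT : T.card ≤ s) (hST : Disjoint S T)
    {κ : Type*} [Fintype κ] (B : κ → Finset (Fin d))
    (hB : ∀ j, Disjoint (S ∪ T) (B j) ∧ (B j).card ≤ s)
    (h : Fin d → ℝ) (hh : restr (S ∪ T)ᶜ h = ∑ j, restr (B j) h) :
    (1 - δ) * l2 (restr (S ∪ T) h)
      ≤ √(1 + δ) * l2 (Φ *ᵥ h) + √2 * δ * ∑ j, l2 (restr (B j) h) := by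
  set h₀ := restr (S ∪ T) h
  set X := l2 h₀
  set K := √(1 + δ) * l2 (Φ *ᵥ h) + √2 * δ * ∑ j, l2 (restr (B j) h)
  have hsp : Sparse (2 * s) h₀ :=
    sparse_restr ((card_union_le S T).trans (by omega)) h
  have hΦh : Φ *ᵥ h = Φ *ᵥ h₀ + ∑ j, Φ *ᵥ restr (B j) h := by
    rw [← mulVec_sum, ← hh, ← mulVec_add, restr_add_restr_compl]
  have hcross : ∀ j, |(Φ *ᵥ h₀) ⬝ᵥ (Φ *ᵥ restr (B j) h)| ≤ √2 * δ * X * l2 (restr (B j) h) :=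
    fun j => abs_dotProduct_mulVec_restr_union_le hΦ hδ hS hT (hB j).2 hST (hB j).1 h
  have htail : -∑ j, (Φ *ᵥ h₀) ⬝ᵥ (Φ *ᵥ restr (B j) h) ≤ ∑ j, √2 * δ * X * l2 (restr (B j) h) := by
    rw [← sum_neg_distrib]
    exact sum_le_sum fun j _ => (neg_le_abs _).trans (hcross j)
  have hquad : (1 - δ) * X ^ 2 ≤ X * K :=
    calc (1 - δ) * X ^ 2 ≤ (Φ *ᵥ h₀) ⬝ᵥ (Φ *ᵥ h₀) := l2_sq (Φ *ᵥ h₀) ▸ (hΦ h₀ hsp).1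
      _ = (Φ *ᵥ h₀) ⬝ᵥ (Φ *ᵥ h) - ∑ j, (Φ *ᵥ h₀) ⬝ᵥ (Φ *ᵥ restr (B j) h) := by
          rw [hΦh, dotProduct_add, dotProduct_sum]; ring
      _ ≤ l2 (Φ *ᵥ h₀) * l2 (Φ *ᵥ h) + ∑ j, √2 * δ * X * l2 (restr (B j) h) := by
          linarith [(le_abs_self _).trans (abs_dotProduct_le (Φ *ᵥ h₀) (Φ *ᵥ h))]
      _ ≤ X * K := by
          rw [← mul_sum]
          nlinarith [mul_le_mul_of_nonneg_right (l2_mulVec_le_of_rip hΦ hsp) (l2_nonneg (Φ *ᵥ h))]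
  have hX0 : 0 ≤ X := l2_nonneg h₀
  rcases hX0.eq_or_lt with hX | hX
  · rw [← hX, mul_zero]
    exact add_nonneg (mul_nonneg (Real.sqrt_nonneg _) (l2_nonneg _))
      (mul_nonneg (mul_nonneg (Real.sqrt_nonneg _) hδ) (sum_nonneg fun j _ => l2_nonneg _))
  · exact le_of_mul_le_mul_left (by linarith) hX

lemma l2_le_of_rip_of_cone (hΦ : RICq Φ (2 * s) δ) (hδ0 : 0 ≤ δ) (hδ1 : δ < 1)
    {S : Finset (Fin d)} (hS : S.card = s) (hs : 0 < s) {h : Fin d → ℝ} {ε C η ρ α : ℝ}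
    (hρ : ρ = √2 * δ / (1 - δ)) (hα : α = 2 * √(1 + δ) / (1 - δ))
    (hΦh : l2 (Φ *ᵥ h) ≤ 2 * ε) (hC : 0 ≤ C) (hρC : ρ * C < 1)
    (hcone : ∑ i ∈ Sᶜ, |h i| ≤ C * ∑ i ∈ S, |h i| + η) :
    l2 h ≤ (1 + C) * ((α * ε + ρ * (η / √s)) / (1 - ρ * C)) + η / √s := by
  obtain ⟨T₀, hT₀, hT₀card, n, B, hB, hsum, hbound⟩ := exists_head_and_blocks h hs Sᶜ
  have hST : Disjoint S T₀ := disjoint_of_subset_right hT₀ disjoint_compl_right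
  have hcompl : (S ∪ T₀)ᶜ = Sᶜ \ T₀ := by ext; simp
  have hSTB : ∀ j, Disjoint (S ∪ T₀) (B j) ∧ (B j).card ≤ s := fun j =>
    ⟨disjoint_of_subset_right ((hB j).1.trans_eq hcompl.symm) disjoint_compl_right, (hB j).2⟩
  set X := l2 (restr (S ∪ T₀) h)
  set Y := ∑ j, l2 (restr (B j) h)
  have hs' : 0 < √s := Real.sqrt_pos.2 (by exact_mod_cast hs)
  have hρ0 : 0 ≤ ρ := hρ ▸ by have := Real.sqrt_nonneg 2; positivity
  have hX : X ≤ α * ε + ρ * Y := by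
    have := sub_mul_l2_restr_le_of_rip hΦ hδ0 hS.le hT₀card hST B hSTB h (hcompl ▸ hsum)
    rw [hα, hρ, div_mul_eq_mul_div, div_mul_eq_mul_div, ← add_div,
      le_div_iff₀' (by linarith)]
    nlinarith [mul_le_mul_of_nonneg_left hΦh (Real.sqrt_nonneg (1 + δ))]
  have hR : ∑ i ∈ S, |h i| ≤ √s * X :=
    (sum_abs_le_sqrt_card_mul_l2_restr S h).trans
      (hS ▸ mul_le_mul_of_nonneg_left (l2_restr_mono subset_union_left h) (Real.sqrt_nonneg _))
  have hY : Y ≤ C * X + η / √s := by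
    refine le_of_mul_le_mul_left ?_ hs'
    rw [mul_add, mul_div_cancel₀ _ hs'.ne']
    nlinarith [mul_le_mul_of_nonneg_left hR hC]
  have hh : l2 h ≤ X + Y := by
    rw [← restr_add_restr_compl (S ∪ T₀) h, hcompl, hsum]
    linarith [l2_add_le (restr (S ∪ T₀) h) (∑ j, restr (B j) h),
      l2_sum_le univ fun j => restr (B j) h]
  have hX' : X ≤ (α * ε + ρ * (η / √s)) / (1 - ρ * C) := by
    rw [le_div_iff₀ (by linarith)]
    nlinarith [mul_le_mul_of_nonneg_left hY hρ0]
  calc l2 h ≤ (1 + C) * X + η / √s := by linarith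
    _ ≤ _ := by gcongr

end RIP

section Cone

variable {ι : Type*} [Fintype ι] [DecidableEq ι]

lemma sum_compl_abs_sub_le_of_weighted_min {S : Finset ι} {x y W : ι → ℝ} {a c C : ℝ}
    (ha : 0 < a) (hc : 0 < c) (hC : 0 < C) (hWa : ∀ i, a ≤ W i) (hWS : ∀ i ∈ S, c ≤ W i)
    (hWSc : ∀ i ∉ S, W i ≤ C) (hmin : ∑ i, |y i| / W i ≤ ∑ i, |x i| / W i) :
    ∑ i ∈ Sᶜ, |x i - y i| ≤ C / c * ∑ i ∈ S, |x i - y i| + 2 * C / a * ∑ i ∈ Sᶜ, |x i| := by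
  have hW : ∀ i, 0 < W i := fun i => ha.trans_le (hWa i)
  have hoff : ∀ i ∈ Sᶜ, |x i - y i| / C - 2 / a * |x i| ≤ |y i| / W i - |x i| / W i := by
    intro i hi
    have h1 : |x i - y i| / C ≤ |x i - y i| / W i :=
      div_le_div_of_nonneg_left (abs_nonneg _) (hW i) (hWSc i (mem_compl.1 hi))
    have h2 : |x i| / W i ≤ |x i| / a := div_le_div_of_nonneg_left (abs_nonneg _) ha (hWa i)
    have h3 : |x i - y i| / W i ≤ (|x i| + |y i|) / W i :=
      div_le_div_of_nonneg_right (abs_sub _ _) (hW i).le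
    rw [add_div] at h3
    linarith [show 2 / a * |x i| = 2 * (|x i| / a) by ring]
  have hon : ∀ i ∈ S, |x i| / W i - |y i| / W i ≤ |x i - y i| / c := fun i hi => by
    rw [← sub_div]
    exact (div_le_div_of_nonneg_right (abs_sub_abs_le_abs_sub _ _) (hW i).le).trans
      (div_le_div_of_nonneg_left (abs_nonneg _) hc (hWS i hi))
  have hoff' := sum_le_sum hoff
  have hon' := sum_le_sum hon
  rw [← sum_add_sum_compl S, ← sum_add_sum_compl S (fun i => |x i| / W i)] at hmin
  simp only [sum_sub_distrib, ← sum_div, ← mul_sum] at hoff' hon'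
  have hkey : (∑ i ∈ Sᶜ, |x i - y i|) / C
      ≤ (∑ i ∈ S, |x i - y i|) / c + 2 / a * ∑ i ∈ Sᶜ, |x i| := by
    linarith
  calc ∑ i ∈ Sᶜ, |x i - y i| = C * ((∑ i ∈ Sᶜ, |x i - y i|) / C) := by field_simp
    _ ≤ C * ((∑ i ∈ S, |x i - y i|) / c + 2 / a * ∑ i ∈ Sᶜ, |x i|) := by gcongr
    _ = _ := by ring

end Cone

lemma ne_zero_of_mem_of_card_le_ncard_support {d : ℕ} {S : Finset (Fin d)} {x : Fin d → ℝ}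
    (hS : ∀ i ∈ S, ∀ j ∉ S, |x j| ≤ |x i|) (hsupp : S.card ≤ {i | x i ≠ 0}.ncard)
    {i : Fin d} (hi : i ∈ S) : x i ≠ 0 := by
  intro hx0
  have hsub : {j | x j ≠ 0} ⊆ ↑(S.erase i) := fun j hj => by
    refine mem_erase.2 ⟨fun h => hj (h ▸ hx0), ?_⟩
    by_contra hjS
    exact hj (abs_nonpos_iff.1 (by simpa [hx0] using hS i hi j hjS))
  have := (Set.ncard_le_ncard hsub (finite_toSet _)).trans_eq (Set.ncard_coe_finset _)
  rw [card_erase_of_mem hi] at this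
  have := card_pos.2 ⟨i, hi⟩
  omega

/-- **Single reweighted ℓ1-minimization.**
Here `restr S x` plays the role of `x_s` (a best `s`-sparse approximation of `x`),
`μ` is the smallest nonzero coordinate of `x_s` in absolute value, and `xhat` is a
minimizer of the weighted ℓ1 norm `∑ i, |z i|/(|w i| + a)` over all `z` with
`‖Φz − u‖₂ ≤ ε`, where `u = Φx + e`. -/
theorem stmt16 (m d s : ℕ)
    (Φ : Matrix (Fin m) (Fin d) ℝ)
    (δ : ℝ) (hδ0 : 0 ≤ δ) (hδ : δ < Real.sqrt 2 - 1) (hΦ : RICq Φ (2 * s) δ)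
    (x : Fin d → ℝ) (e : Fin m → ℝ) (ε : ℝ) (he : l2 e ≤ ε)
    (w : Fin d → ℝ) (A : ℝ) (hw : ∀ i, |w i - x i| ≤ A)
    (S : Finset (Fin d)) (hScard : S.card = s)
    (hSbig : ∀ i ∈ S, ∀ j ∉ S, |x j| ≤ |x i|)
    (hssupp : s ≤ {i | x i ≠ 0}.ncard)
    (μ : ℝ) (hμ : IsLeast {t : ℝ | ∃ i ∈ S, x i ≠ 0 ∧ t = |x i|} μ)
    (b : ℝ) (hb : b = linf (x - restr S x))
    (a : ℝ) (ha : 0 < a)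
    (xhat : Fin d → ℝ)
    (hfeas : l2 (Φ.mulVec xhat - (Φ.mulVec x + e)) ≤ ε)
    (hmin : ∀ z : Fin d → ℝ, l2 (Φ.mulVec z - (Φ.mulVec x + e)) ≤ ε →
      (∑ i, |xhat i| / (|w i| + a)) ≤ ∑ i, |z i| / (|w i| + a))
    (ρ α C₁ C₂ D₁ D₂ : ℝ)
    (hρ : ρ = Real.sqrt 2 * δ / (1 - δ))
    (hα : α = 2 * Real.sqrt (1 + δ) / (1 - δ))
    (hC₁ : C₁ = (A + a + b) / (μ - A + a))
    (hC₂ : C₂ = 2 * (A + a + b) / Real.sqrt s)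
    (hD₁ : D₁ = (1 + C₁) * α / (1 - ρ * C₁))
    (hD₂ : D₂ = C₂ + (1 + C₁) * ρ * C₂ / (1 - ρ * C₁))
    (hμA : A ≤ μ) (hρC : ρ * C₁ < 1) :
    l2 (x - xhat) ≤ D₁ * ε + D₂ * l1 (x - restr S x) / a := by
  obtain ⟨i₁, hi₁, -, -⟩ := hμ.1
  have hs : 0 < s := hScard ▸ card_pos.2 ⟨i₁, hi₁⟩
  have hA : 0 ≤ A := (abs_nonneg _).trans (hw i₁)
  have hb0 : 0 ≤ b := hb ▸ (abs_nonneg _).trans (abs_le_linf _ i₁)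
  have hxb : ∀ i ∉ S, |x i| ≤ b := fun i hi => hb ▸ abs_le_linf_sub_restr hi x
  have hμx : ∀ i ∈ S, μ ≤ |x i| := fun i hi =>
    hμ.2 ⟨i, hi, ne_zero_of_mem_of_card_le_ncard_support hSbig (hScard ▸ hssupp) hi, rfl⟩
  have hδ1 : δ < 1 := by linarith [Real.sqrt_two_lt_three_halves]
  have hWS : ∀ i ∈ S, μ - A + a ≤ |w i| + a := fun i hi => by
    linarith [hμx i hi, hw i, abs_sub_abs_le_abs_sub (x i) (w i), abs_sub_comm (x i) (w i)]
  have hWSc : ∀ i ∉ S, |w i| + a ≤ A + a + b := fun i hi => by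
    linarith [hxb i hi, hw i, abs_sub_abs_le_abs_sub (w i) (x i)]
  have hxfeas : l2 (Φ *ᵥ x - (Φ *ᵥ x + e)) ≤ ε := by simpa [l2_neg] using he
  have hcone := sum_compl_abs_sub_le_of_weighted_min ha (by linarith) (by linarith)
    (fun i => le_add_of_nonneg_left (abs_nonneg (w i))) hWS hWSc (hmin x hxfeas)
  have hC₁0 : 0 ≤ C₁ := hC₁ ▸ div_nonneg (by linarith) (by linarith)
  refine (l2_le_of_rip_of_cone hΦ hδ0 hδ1 hScard hs hρ hα
    (l2_mulVec_sub_le_of_feasible hxfeas hfeas) hC₁0 hρC (hC₁ ▸ hcone)).trans_eq ?_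
  rw [sub_restr, l1_restr, hD₁, hD₂, hC₂]
  field_simp
  ring
end

section
/- (Noisy randomized Kaczmarz.) Let A be an m×n real matrix with nonzero rows a₁, …, a_m and with full column rank, so that ‖A⁻¹‖ := inf{ M : M‖Az‖₂ ≥ ‖z‖₂ for all z ∈ ℝⁿ } is finite. Let x ∈ ℝⁿ, b = Ax, and let r ∈ ℝ^m be an arbitrary error vector. Fix x₀ ∈ ℝⁿ, and for k ≥ 1 define x_k* = x_{k−1}* + ((b_{i_k} + r_{i_k} − ⟨a_{i_k}, x_{k−1}*⟩)/‖a_{i_k}‖₂²) a_{i_k}, where the indices i₁, i₂, … are chosen independently at random from {1, …, m}, each index i chosen with probability ‖a_i‖₂²/‖A‖_F². Then for every k, E‖x_k* − x‖₂ ≤ (1 − 1/R)^{k/2} ‖x₀ − x‖₂ + √R γ, where R = ‖A⁻¹‖² ‖A‖_F², γ = max_i |r_i|/‖a_i‖₂, and the expectation is over the random choice of the indices i₁, …, i_k (i.e., the sum over all index sequences in {1,…,m}^k weighted by the product of their selection probabilities). -/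
/-- One step of the (noisy) Kaczmarz method for the system `Ax ≈ bb + rr`, using row
`i`: project the current iterate `y` onto the solution space of
`⟨a_i, x⟩ = bb_i + rr_i`. -/
noncomputable def kaczStep {m n : ℕ} (A : Matrix (Fin m) (Fin n) ℝ) (bb rr : Fin m → ℝ)
    (i : Fin m) (y : Fin n → ℝ) : Fin n → ℝ :=
  fun j => y j + ((bb i + rr i - ∑ l, A i l * y l) / (∑ l, (A i l) ^ 2)) * A i j

/-- The Kaczmarz iterate after `k` steps, starting from `x0` and using the rows
indexed by the sequence `ω : Fin k → Fin m` (in order). -/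
noncomputable def kaczIter {m n : ℕ} (A : Matrix (Fin m) (Fin n) ℝ) (bb rr : Fin m → ℝ)
    (x0 : Fin n → ℝ) : {k : ℕ} → (Fin k → Fin m) → Fin n → ℝ
  | 0, _ => x0
  | k + 1, ω => kaczStep A bb rr (ω (Fin.last k)) (kaczIter A bb rr x0 fun j => ω j.castSucc)

/-!
A Kaczmarz step projects the current iterate onto the hyperplane `⟨a_i, ·⟩ = b_i + r_i`, which
is the solution hyperplane of row `i` shifted by `r_i / ‖a_i‖₂` along `a_i`. Hence the squared
error `e` changes by `-⟨a_i, e⟩² / ‖a_i‖₂² + r_i² / ‖a_i‖₂²`. Averaging over `i` with weights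
`‖a_i‖₂² / ‖A‖_F²` turns this into `-‖Ae‖₂² / ‖A‖_F² + ‖r‖₂² / ‖A‖_F² ≤ -‖e‖₂² / R + γ²`, so
`E‖e_k‖₂² ≤ (1 - 1/R)^k ‖e_0‖₂² + R γ²` by induction on `k`. Jensen's inequality for `√·` and
`√(s + t) ≤ √s + √t` then give the bound on `E‖e_k‖₂`.
-/

open Finset Matrix

theorem Real.sqrt_add_le_add_sqrt {s t : ℝ} (hs : 0 ≤ s) (ht : 0 ≤ t) : √(s + t) ≤ √s + √t := by
  rw [Real.sqrt_le_left (by positivity), add_sq, Real.sq_sqrt hs, Real.sq_sqrt ht]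
  nlinarith [Real.sqrt_nonneg s, Real.sqrt_nonneg t]

section IndexSequences

variable {ι : Type*}

theorem prod_comp_snoc {k : ℕ} (p : ι → ℝ) (ω : Fin k → ι) (i : ι) :
    ∏ j, p ((Fin.snoc ω i : Fin (k + 1) → ι) j) = (∏ j, p (ω j)) * p i := by
  simp [Fin.prod_univ_castSucc]

variable [Fintype ι]

theorem sum_fin_succ_eq_sum_snoc {k : ℕ} (f : (Fin (k + 1) → ι) → ℝ) :
    ∑ ω, f ω = ∑ ω : Fin k → ι, ∑ i, f (Fin.snoc ω i) := by
  rw [← (Fin.snocEquiv fun _ => ι).sum_comp, Fintype.sum_prod_type, Finset.sum_comm]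
  simp [Fin.snocEquiv]

theorem sum_prod_eq_one {p : ι → ℝ} (hp : ∑ i, p i = 1) (k : ℕ) :
    ∑ ω : Fin k → ι, ∏ j, p (ω j) = 1 := by
  rw [← Fintype.sum_pow, hp, one_pow]

theorem sum_prod_mul_le_of_drift {p : ι → ℝ} (hp0 : ∀ i, 0 ≤ p i) (hp1 : ∑ i, p i = 1)
    (V : (k : ℕ) → (Fin k → ι) → ℝ) {α β C : ℝ} (hα : 0 ≤ α) (hC : 0 ≤ C)
    (hβ : β ≤ (1 - α) * C)
    (hV : ∀ k (ω : Fin k → ι), ∑ i, p i * V (k + 1) (Fin.snoc ω i) ≤ α * V k ω + β) (k : ℕ) :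
    ∑ ω : Fin k → ι, (∏ j, p (ω j)) * V k ω ≤ α ^ k * V 0 ![] + C := by
  induction k with
  | zero => simpa [Subsingleton.elim _ ![]] using hC
  | succ k ih =>
    have hw : ∀ ω : Fin k → ι, 0 ≤ ∏ j, p (ω j) := fun ω => prod_nonneg fun j _ => hp0 _
    calc ∑ ω, (∏ j, p (ω j)) * V (k + 1) ω
        = ∑ ω : Fin k → ι, (∏ j, p (ω j)) * ∑ i, p i * V (k + 1) (Fin.snoc ω i) := by
          simp only [sum_fin_succ_eq_sum_snoc, prod_comp_snoc, mul_sum, mul_assoc]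
      _ ≤ ∑ ω : Fin k → ι, (∏ j, p (ω j)) * (α * V k ω + β) :=
          sum_le_sum fun ω _ => mul_le_mul_of_nonneg_left (hV k ω) (hw ω)
      _ = α * ∑ ω : Fin k → ι, (∏ j, p (ω j)) * V k ω +
            β * ∑ ω : Fin k → ι, ∏ j, p (ω j) := by
          rw [mul_sum, mul_sum, ← sum_add_distrib]
          exact sum_congr rfl fun ω _ => by ring
      _ ≤ α * (α ^ k * V 0 ![] + C) + β := by
          rw [sum_prod_eq_one hp1, mul_one]
          gcongr
      _ ≤ α ^ (k + 1) * V 0 ![] + C := by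
          rw [pow_succ]
          linarith

theorem sum_prod_mul_sqrt_le {k : ℕ} {p : ι → ℝ} (hp0 : ∀ i, 0 ≤ p i) (hp1 : ∑ i, p i = 1)
    {V : (Fin k → ι) → ℝ} (hV : ∀ ω, 0 ≤ V ω) {s t : ℝ} (hs : 0 ≤ s) (ht : 0 ≤ t)
    (h : ∑ ω, (∏ j, p (ω j)) * V ω ≤ s + t) :
    ∑ ω, (∏ j, p (ω j)) * √(V ω) ≤ √s + √t :=
  calc ∑ ω, (∏ j, p (ω j)) * √(V ω) ≤ √(∑ ω, (∏ j, p (ω j)) * V ω) :=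
        Real.strictConcaveOn_sqrt.concaveOn.le_map_sum (fun _ _ => prod_nonneg fun _ _ => hp0 _)
          (sum_prod_eq_one hp1 k) fun ω _ => hV ω
    _ ≤ √(s + t) := Real.sqrt_le_sqrt h
    _ ≤ √s + √t := Real.sqrt_add_le_add_sqrt hs ht

end IndexSequences

theorem l2_eq_sqrt_dotProduct {κ : Type*} [Fintype κ] (v : κ → ℝ) : l2 v = √(v ⬝ᵥ v) := by
  simp [l2, dotProduct, sq]

theorem Matrix.dotProduct_self_nonneg {κ : Type*} [Fintype κ] (v : κ → ℝ) : 0 ≤ v ⬝ᵥ v := by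
  simpa using dotProduct_star_self_nonneg v

theorem dotProduct_self_le_sq_mul_of_l2_le {κ κ' : Type*} [Fintype κ] [Fintype κ']
    {z : κ → ℝ} {w : κ' → ℝ} {M : ℝ} (h : l2 z ≤ M * l2 w) : z ⬝ᵥ z ≤ M ^ 2 * (w ⬝ᵥ w) := by
  rw [l2_eq_sqrt_dotProduct, l2_eq_sqrt_dotProduct] at h
  calc z ⬝ᵥ z = √(z ⬝ᵥ z) ^ 2 := (Real.sq_sqrt (dotProduct_self_nonneg z)).symm
    _ ≤ (M * √(w ⬝ᵥ w)) ^ 2 := pow_le_pow_left₀ (Real.sqrt_nonneg _) h 2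
    _ = M ^ 2 * (w ⬝ᵥ w) := by rw [mul_pow, Real.sq_sqrt (dotProduct_self_nonneg w)]

theorem csInf_mem_setOf_le_mul {α : Type*} {f g : α → ℝ} (hg : ∀ z, 0 ≤ g z)
    (hS : {M : ℝ | ∀ z, f z ≤ M * g z}.Nonempty) :
    sInf {M : ℝ | ∀ z, f z ≤ M * g z} ∈ {M : ℝ | ∀ z, f z ≤ M * g z} := by
  intro z
  obtain ⟨M₀, hM₀⟩ := hS
  rcases (hg z).eq_or_lt with h0 | hpos
  · simpa [← h0] using hM₀ z
  · exact (div_le_iff₀ hpos).1 (le_csInf ⟨M₀, hM₀⟩ fun M hM => (div_le_iff₀ hpos).2 (hM z))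

theorem Matrix.mulVec_dotProduct_self_le {ι κ : Type*} [Fintype ι] [Fintype κ]
    (A : Matrix ι κ ℝ) (z : κ → ℝ) : A *ᵥ z ⬝ᵥ A *ᵥ z ≤ (∑ i, A i ⬝ᵥ A i) * (z ⬝ᵥ z) := by
  rw [sum_mul]
  refine sum_le_sum fun i _ => ?_
  simpa [dotProduct, mulVec, sq] using sum_mul_sq_le_sq_mul_sq univ (A i) z

theorem one_le_sq_mul_sum_dotProduct_self {ι κ : Type*} [Fintype ι] [Fintype κ] [Nonempty κ]
    {A : Matrix ι κ ℝ} {M : ℝ} (hM : ∀ z, z ⬝ᵥ z ≤ M ^ 2 * (A *ᵥ z ⬝ᵥ A *ᵥ z)) :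
    1 ≤ M ^ 2 * ∑ i, A i ⬝ᵥ A i := by
  set z : κ → ℝ := fun _ => 1
  have hz : 0 < z ⬝ᵥ z := by simp [z, dotProduct, Fintype.card_pos]
  refine le_of_mul_le_mul_right ?_ hz
  calc 1 * (z ⬝ᵥ z) ≤ M ^ 2 * (A *ᵥ z ⬝ᵥ A *ᵥ z) := by rw [one_mul]; exact hM z
    _ ≤ M ^ 2 * ((∑ i, A i ⬝ᵥ A i) * (z ⬝ᵥ z)) :=
      mul_le_mul_of_nonneg_left (mulVec_dotProduct_self_le A z) (sq_nonneg M)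
    _ = (M ^ 2 * ∑ i, A i ⬝ᵥ A i) * (z ⬝ᵥ z) := by ring

theorem dotProduct_self_add_smul_sub {K κ : Type*} [Field K] [Fintype κ] (a y x : κ → K) (c : K)
    (ha : a ⬝ᵥ a ≠ 0) :
    (y + ((c - a ⬝ᵥ y) / (a ⬝ᵥ a)) • a - x) ⬝ᵥ (y + ((c - a ⬝ᵥ y) / (a ⬝ᵥ a)) • a - x) =
      (y - x) ⬝ᵥ (y - x) - (a ⬝ᵥ (y - x)) ^ 2 / (a ⬝ᵥ a) + (c - a ⬝ᵥ x) ^ 2 / (a ⬝ᵥ a) := by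
  have hy : a ⬝ᵥ y = a ⬝ᵥ (y - x) + a ⬝ᵥ x := by rw [dotProduct_sub]; ring
  rw [add_sub_right_comm, hy]
  simp only [add_dotProduct, dotProduct_add, smul_dotProduct, dotProduct_smul, smul_eq_mul,
    dotProduct_comm (y - x) a]
  field_simp
  ring

section Kaczmarz

variable {m n : ℕ} (A : Matrix (Fin m) (Fin n) ℝ)

theorem kaczStep_eq (bb rr : Fin m → ℝ) (i : Fin m) (y : Fin n → ℝ) :
    kaczStep A bb rr i y = y + ((bb i + rr i - A i ⬝ᵥ y) / (A i ⬝ᵥ A i)) • A i := by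
  ext j
  simp [kaczStep, dotProduct, sq]

theorem kaczStep_sub_dotProduct_self (x : Fin n → ℝ) (r : Fin m → ℝ) {i : Fin m}
    (hi : A i ⬝ᵥ A i ≠ 0) (y : Fin n → ℝ) :
    (kaczStep A (A *ᵥ x) r i y - x) ⬝ᵥ (kaczStep A (A *ᵥ x) r i y - x) =
      (y - x) ⬝ᵥ (y - x) - (A i ⬝ᵥ (y - x)) ^ 2 / (A i ⬝ᵥ A i) + r i ^ 2 / (A i ⬝ᵥ A i) := by
  rw [kaczStep_eq, dotProduct_self_add_smul_sub _ _ _ _ hi]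
  congr 3
  show A i ⬝ᵥ x + r i - A i ⬝ᵥ x = r i
  ring

theorem sum_mul_kaczStep_sub_dotProduct_self_le {M γ : ℝ} (hA : ∀ i, 0 < A i ⬝ᵥ A i)
    (hF : 0 < ∑ i, A i ⬝ᵥ A i) (hM : ∀ z, z ⬝ᵥ z ≤ M ^ 2 * (A *ᵥ z ⬝ᵥ A *ᵥ z))
    {r : Fin m → ℝ} (hγ : ∀ i, |r i| / √(A i ⬝ᵥ A i) ≤ γ) (x y : Fin n → ℝ) :
    ∑ i, A i ⬝ᵥ A i / (∑ i, A i ⬝ᵥ A i) *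
        ((kaczStep A (A *ᵥ x) r i y - x) ⬝ᵥ (kaczStep A (A *ᵥ x) r i y - x)) ≤
      (1 - 1 / (M ^ 2 * ∑ i, A i ⬝ᵥ A i)) * ((y - x) ⬝ᵥ (y - x)) + γ ^ 2 := by
  set F := ∑ i, A i ⬝ᵥ A i
  have hterm : ∀ i, A i ⬝ᵥ A i / F *
      ((kaczStep A (A *ᵥ x) r i y - x) ⬝ᵥ (kaczStep A (A *ᵥ x) r i y - x)) =
        (A i ⬝ᵥ A i * ((y - x) ⬝ᵥ (y - x)) - (A i ⬝ᵥ (y - x)) ^ 2 + r i ^ 2) / F := by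
    intro i
    rw [kaczStep_sub_dotProduct_self A x r (hA i).ne']
    field_simp [(hA i).ne']
  have hAd : ∑ i, (A i ⬝ᵥ (y - x)) ^ 2 = A *ᵥ (y - x) ⬝ᵥ A *ᵥ (y - x) := by
    simp [dotProduct, mulVec, sq]
  have hr : ∑ i, r i ^ 2 ≤ γ ^ 2 * F := by
    rw [mul_sum]
    refine sum_le_sum fun i _ => ?_
    have hsqrt := Real.sqrt_pos.2 (hA i)
    have h := (div_le_iff₀ hsqrt).1 (hγ i)
    calc r i ^ 2 = |r i| ^ 2 := (sq_abs _).symm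
      _ ≤ (γ * √(A i ⬝ᵥ A i)) ^ 2 := pow_le_pow_left₀ (abs_nonneg _) h 2
      _ = γ ^ 2 * A i ⬝ᵥ A i := by rw [mul_pow, Real.sq_sqrt (hA i).le]
  have hd : (y - x) ⬝ᵥ (y - x) / (M ^ 2 * F) ≤ A *ᵥ (y - x) ⬝ᵥ A *ᵥ (y - x) / F := by
    rw [← div_div]
    gcongr
    exact div_le_of_le_mul₀ (sq_nonneg M) (dotProduct_self_nonneg _) (by linarith [hM (y - x)])
  rw [sum_congr rfl fun i _ => hterm i, ← sum_div, sum_add_distrib, sum_sub_distrib, ← sum_mul,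
    hAd, add_div, sub_div, mul_div_cancel_left₀ _ hF.ne']
  rw [sub_mul, one_mul, one_div_mul_eq_div]
  linarith [(div_le_iff₀ hF).2 hr]

theorem kaczIter_snoc (bb rr : Fin m → ℝ) (x0 : Fin n → ℝ) {k : ℕ} (ω : Fin k → Fin m)
    (i : Fin m) :
    kaczIter A bb rr x0 (Fin.snoc ω i) = kaczStep A bb rr i (kaczIter A bb rr x0 ω) := by
  simp [kaczIter]

theorem sum_prod_mul_l2_kaczIter_sub_le [Nonempty (Fin n)] {M R γ : ℝ}
    (hA : ∀ i, 0 < A i ⬝ᵥ A i) (hF : 0 < ∑ i, A i ⬝ᵥ A i)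
    (hM : ∀ z, z ⬝ᵥ z ≤ M ^ 2 * (A *ᵥ z ⬝ᵥ A *ᵥ z)) (hR : R = M ^ 2 * ∑ i, A i ⬝ᵥ A i)
    {r : Fin m → ℝ} (hγ : ∀ i, |r i| / √(A i ⬝ᵥ A i) ≤ γ) (hγ0 : 0 ≤ γ)
    (x x0 : Fin n → ℝ) (k : ℕ) :
    ∑ ω : Fin k → Fin m, (∏ j, A (ω j) ⬝ᵥ A (ω j) / ∑ i, A i ⬝ᵥ A i) *
        l2 (kaczIter A (A *ᵥ x) r x0 ω - x) ≤
      √((1 - 1 / R) ^ k) * l2 (x0 - x) + √R * γ := by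
  have hR1 : 1 ≤ R := hR ▸ one_le_sq_mul_sum_dotProduct_self hM
  have hα : 0 ≤ 1 - 1 / R := sub_nonneg.2 ((div_le_one (by linarith)).2 hR1)
  have hp0 : ∀ i, 0 ≤ A i ⬝ᵥ A i / ∑ i, A i ⬝ᵥ A i := fun i => div_nonneg (hA i).le hF.le
  have hp1 : ∑ i, A i ⬝ᵥ A i / ∑ i, A i ⬝ᵥ A i = 1 := by rw [← sum_div, div_self hF.ne']
  set e : (k : ℕ) → (Fin k → Fin m) → Fin n → ℝ := fun k ω => kaczIter A (A *ᵥ x) r x0 ω - x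
  have hsq := sum_prod_mul_le_of_drift hp0 hp1 (fun k ω => e k ω ⬝ᵥ e k ω)
    (β := γ ^ 2) (C := R * γ ^ 2) hα (by positivity)
    (by rw [sub_sub_cancel, one_div, inv_mul_cancel_left₀ (by linarith)])
    (fun k ω => by
      simpa only [e, kaczIter_snoc, hR] using
        sum_mul_kaczStep_sub_dotProduct_self_le A hA hF hM hγ x (kaczIter A (A *ᵥ x) r x0 ω)) k
  simp only [l2_eq_sqrt_dotProduct]
  calc _ ≤ √((1 - 1 / R) ^ k * ((x0 - x) ⬝ᵥ (x0 - x))) + √(R * γ ^ 2) :=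
        sum_prod_mul_sqrt_le hp0 hp1 (fun ω => dotProduct_self_nonneg _)
          (mul_nonneg (pow_nonneg hα k) (dotProduct_self_nonneg _)) (by positivity) hsq
    _ = _ := by rw [Real.sqrt_mul (pow_nonneg hα k), Real.sqrt_mul (by linarith),
          Real.sqrt_sq hγ0]

end Kaczmarz

/-- **Noisy randomized Kaczmarz.** Let `A` have nonzero rows and full
column rank (so that `‖A⁻¹‖ = sInf {M | ∀ z, ‖z‖₂ ≤ M ‖Az‖₂}` is finite, witnessed by
the nonemptiness hypothesis). Let `b = Ax`, let `r` be an arbitrary error vector, and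
run the randomized Kaczmarz method on `Ax ≈ b + r` from `x₀`, choosing each row `i`
independently with probability `‖a_i‖₂²/‖A‖_F²`. Then the expectation (sum over all
index sequences, weighted by the product of selection probabilities) of
`‖x_k* − x‖₂` is at most `(1 − 1/R)^{k/2} ‖x₀ − x‖₂ + √R γ`, where
`R = ‖A⁻¹‖² ‖A‖_F²` and `γ = max_i |r_i|/‖a_i‖₂`. -/
theorem stmt19 (m n : ℕ) (hm : 0 < m)
    (A : Matrix (Fin m) (Fin n) ℝ)
    (hrows : ∀ i, ∃ j, A i j ≠ 0)
    (hfull : {M : ℝ | ∀ z : Fin n → ℝ, l2 z ≤ M * l2 (A.mulVec z)}.Nonempty)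
    (x x0 : Fin n → ℝ) (r : Fin m → ℝ) (k : ℕ)
    (R γ : ℝ)
    (hR : R = (sInf {M : ℝ | ∀ z : Fin n → ℝ, l2 z ≤ M * l2 (A.mulVec z)}) ^ 2 *
      (∑ i, ∑ l, (A i l) ^ 2))
    (hγ : γ = ⨆ i, |r i| / Real.sqrt (∑ l, (A i l) ^ 2)) :
    (∑ ω : Fin k → Fin m,
        (∏ j, (∑ l, (A (ω j) l) ^ 2) / (∑ i, ∑ l, (A i l) ^ 2)) *
          l2 (kaczIter A (A.mulVec x) r x0 ω - x)) ≤
      Real.sqrt ((1 - 1 / R) ^ k) * l2 (x0 - x) + Real.sqrt R * γ := by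
  have hrow : ∀ i, ∑ l, A i l ^ 2 = A i ⬝ᵥ A i := fun i => by simp [dotProduct, sq]
  simp only [hrow] at hR hγ ⊢
  have : Nonempty (Fin n) := ⟨(hrows ⟨0, hm⟩).choose⟩
  have hA : ∀ i, 0 < A i ⬝ᵥ A i := fun i =>
    (dotProduct_self_nonneg _).lt_of_ne' fun h =>
      (hrows i).choose_spec (congrFun (dotProduct_self_eq_zero.1 h) _)
  have hM : ∀ z, z ⬝ᵥ z ≤ _ ^ 2 * (A *ᵥ z ⬝ᵥ A *ᵥ z) := fun z =>
    dotProduct_self_le_sq_mul_of_l2_le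
      (csInf_mem_setOf_le_mul (fun _ => Real.sqrt_nonneg _) hfull z)
  have hγi : ∀ i, |r i| / √(A i ⬝ᵥ A i) ≤ γ := fun i =>
    hγ ▸ le_ciSup (Set.finite_range fun i => |r i| / √(A i ⬝ᵥ A i)).bddAbove i
  exact sum_prod_mul_l2_kaczIter_sub_le A hA (sum_pos (fun i _ => hA i) ⟨⟨0, hm⟩, mem_univ _⟩)
    hM hR hγi ((div_nonneg (abs_nonneg _) (Real.sqrt_nonneg _)).trans (hγi ⟨0, hm⟩)) x x0 k
end
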